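/- M_n = T_n · H_n: every injective eventual translation β of Y_n factors as β = t·g where t is a product of the elementary ray-shifts t_1,…,t_n and g is a bijective eventual translation (an element of Houghton's group H_n). -/

import Mathlib

def Translates (n : ℕ) (g : Fin n × ℕ → Fin n × ℕ) (m : Fin n → ℤ) : Prop :=
  ∃ K : Finset (Fin n × ℕ), ∀ x : Fin n × ℕ, x ∉ K →
    (g x).1 = x.1 ∧ ((g x).2 : ℤ) = (x.2 : ℤ) + m x.1

def IsEventualTranslation (n : ℕ) (g : Fin n × ℕ → Fin n × ℕ) : Prop :=
  ∃ m : Fin n → ℤ, Translates n g m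

/-- Membership in the monoid `M_n` of injective eventual translations of `Y_n`. -/
def InM (n : ℕ) (α : Fin n × ℕ → Fin n × ℕ) : Prop :=
  Function.Injective α ∧ IsEventualTranslation n α

/-- The element `t_1^{k_1} ⋯ t_n^{k_n}` of the translation monoid `T_n`. -/
def shiftMap (n : ℕ) (k : Fin n → ℕ) : Fin n × ℕ → Fin n × ℕ :=
  fun x => (x.1, x.2 + k x.1)

/-- `β ≥ α` iff `β = t·α` for some `t ∈ T_n`. -/
def Mge (n : ℕ) (β α : Fin n × ℕ → Fin n × ℕ) : Prop :=
  ∃ k : Fin n → ℕ, β = α ∘ shiftMap n k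

/-!
Outside a finite set `β` translates each ray, so it misses only finitely many points, say `c`
of them. Shifting one ray by `c`, i.e. `t = t_i^c`, frees exactly `c` points at its start;
matching these bijectively with the points missed by `β`, and letting `g` agree with `β ∘ t⁻¹`
elsewhere, gives a bijective eventual translation `g` with `β = g ∘ t`.
-/

open Set Function

lemma exists_equiv_comp_eq {α β γ : Type*} {f : α → β} {h : α → γ} (hf : Injective f)
    (hh : Injective h) (e : ↥(range f)ᶜ ≃ ↥(range h)ᶜ) : ∃ g : β ≃ γ, ⇑g ∘ f = h := by
  classical
  let g := (Equiv.Set.compl ((Equiv.ofInjective f hf).symm.trans (Equiv.ofInjective h hh))).symm e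
  refine ⟨g, funext fun a => ?_⟩
  simpa using g.2 ⟨f a, mem_range_self a⟩

lemma finite_setOf_snd_lt {ι : Type*} [Finite ι] (b : ι → ℕ) :
    {x : ι × ℕ | x.2 < b x.1}.Finite :=
  (finite_iUnion fun i => (finite_singleton i).prod (finite_Iio (b i))).subset
    fun x hx => mem_iUnion.2 ⟨x.1, rfl, hx⟩

lemma translates_iff_exists_bound {n : ℕ} {g : Fin n × ℕ → Fin n × ℕ} {m : Fin n → ℤ} :
    Translates n g m ↔ ∃ b : Fin n → ℕ, ∀ x : Fin n × ℕ, b x.1 ≤ x.2 →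
      (g x).1 = x.1 ∧ ((g x).2 : ℤ) = x.2 + m x.1 := by
  constructor
  · rintro ⟨K, hK⟩
    refine ⟨fun _ => K.sup Prod.snd + 1, fun x (hx : K.sup Prod.snd + 1 ≤ x.2) =>
      hK x fun hxK => ?_⟩
    have := Finset.le_sup (f := Prod.snd) hxK
    omega
  · rintro ⟨b, hb⟩
    refine ⟨(finite_setOf_snd_lt b).toFinset, fun x hx => hb x ?_⟩
    simpa using hx

lemma Translates.finite_compl_range {n : ℕ} {g : Fin n × ℕ → Fin n × ℕ} {m : Fin n → ℤ}
    (hg : Translates n g m) : (range g)ᶜ.Finite := by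
  obtain ⟨b, hb⟩ := translates_iff_exists_bound.1 hg
  refine (finite_setOf_snd_lt fun j => (b j + m j).toNat).subset ?_
  rintro ⟨j, q⟩ hq
  show q < (b j + m j).toNat
  by_contra! hle
  obtain ⟨p, hp⟩ : ∃ p : ℕ, (p : ℤ) = q - m j := ⟨_, Int.toNat_of_nonneg (by omega)⟩
  obtain ⟨h1, h2 : ((g (j, p)).2 : ℤ) = p + m j⟩ := hb (j, p) (show b j ≤ p by omega)
  exact hq ⟨(j, p), Prod.ext h1 (by omega)⟩

lemma Translates.of_comp_shiftMap {n : ℕ} {g β : Fin n × ℕ → Fin n × ℕ} {m : Fin n → ℤ}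
    {k : Fin n → ℕ} (hβ : Translates n β m) (hg : g ∘ shiftMap n k = β) :
    Translates n g (fun i => m i - k i) := by
  obtain ⟨b, hb⟩ := translates_iff_exists_bound.1 hβ
  refine translates_iff_exists_bound.2 ⟨b + k, ?_⟩
  rintro ⟨i, p⟩ (hp : b i + k i ≤ p)
  obtain ⟨q, rfl⟩ : ∃ q, p = q + k i := ⟨p - k i, by omega⟩
  obtain ⟨h1, h2 : ((β (i, q)).2 : ℤ) = q + m i⟩ := hb (i, q) (show b i ≤ q by omega)
  have hgq : g (i, q + k i) = β (i, q) := congrFun hg (i, q)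
  rw [hgq]
  exact ⟨h1, by push_cast at h2 ⊢; omega⟩

lemma compl_range_shiftMap {n : ℕ} (k : Fin n → ℕ) :
    (range (shiftMap n k))ᶜ = {x | x.2 < k x.1} := by
  ext ⟨i, p⟩
  simp only [mem_compl_iff, mem_range, shiftMap, Prod.mk.injEq, mem_ofPred_eq, not_exists,
    not_and]
  constructor
  · intro h
    by_contra! hp
    exact h (i, p - k i) rfl (show p - k i + k i = p by omega)
  · rintro hp ⟨j, q⟩ rfl
    omega

lemma shiftMap_injective {n : ℕ} (k : Fin n → ℕ) : Injective (shiftMap n k) := by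
  rintro ⟨i, p⟩ ⟨j, q⟩ h
  simp only [shiftMap, Prod.mk.injEq] at h
  obtain ⟨rfl, h⟩ := h
  simp only [Prod.mk.injEq, true_and]
  omega

lemma exists_shiftMap_compl_range_equiv {n : ℕ} (s : Set (Fin n × ℕ)) (hs : s.Finite) :
    ∃ k : Fin n → ℕ, Nonempty (↥(range (shiftMap n k))ᶜ ≃ s) := by
  -- `Fin n` may be empty, so the ray to shift is read off a point of `s`.
  rcases s.eq_empty_or_nonempty with rfl | ⟨⟨i, _⟩, -⟩
  · exact ⟨0, ⟨Equiv.setCongr (by simp [compl_range_shiftMap])⟩⟩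
  refine ⟨Pi.single i s.ncard, ?_⟩
  have hcompl : (range (shiftMap n (Pi.single i s.ncard)))ᶜ = Prod.mk i '' Iio s.ncard := by
    rw [compl_range_shiftMap]
    ext ⟨j, p⟩
    by_cases hj : j = i
    · subst hj; simp
    · simp [hj, Ne.symm hj]
  have hfin : (range (shiftMap n (Pi.single i s.ncard)))ᶜ.Finite :=
    hcompl ▸ (finite_Iio _).image _
  have := hfin.to_subtype
  have := hs.to_subtype
  rw [← Finite.card_eq, Nat.card_coe_set_eq, Nat.card_coe_set_eq, hcompl,
    ncard_image_of_injective _ (Prod.mk_right_injective i), ncard_Iio_nat]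

/-- `M_n = T_n · H_n`: every injective eventual translation `β` of `Y_n`
factors as `β = t·g` with `t = t_1^{k_1}⋯t_n^{k_n} ∈ T_n` and `g` a bijective
eventual translation (an element of Houghton's group `H_n`). -/
theorem M_eq_T_mul_H (n : ℕ) (β : Fin n × ℕ → Fin n × ℕ) (hβ : InM n β) :
    ∃ (k : Fin n → ℕ) (g : Fin n × ℕ → Fin n × ℕ),
      Function.Bijective g ∧ IsEventualTranslation n g ∧
        β = g ∘ shiftMap n k := by
  obtain ⟨hinj, m, hm⟩ := hβ
  obtain ⟨k, ⟨e⟩⟩ := exists_shiftMap_compl_range_equiv _ hm.finite_compl_range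
  obtain ⟨g, hg⟩ := exists_equiv_comp_eq (shiftMap_injective k) hinj e
  exact ⟨k, g, g.bijective, ⟨_, hm.of_comp_shiftMap hg⟩, hg.symm⟩
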